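/- arXiv:0804.2906 — 3 statements merged into one kernel-verified Lean document; each statement's English description precedes it below -/
import Mathlib

section
/- A compact operator on a Hilbert space that commutes with a self-adjoint bounded operator having no eigenvectors (i.e. a diffuse operator) must be zero. -/
open Module Module.End

theorem Module.End.exists_hasEigenvalue_of_invariant {K V : Type*} [Field K] [IsAlgClosed K]
    [AddCommGroup V] [Module K V] {f : End K V} {p : Submodule K V}
    [FiniteDimensional K p] [Nontrivial p] (hfp : ∀ x ∈ p, f x ∈ p) :
    ∃ μ, f.HasEigenvalue μ := by
  obtain ⟨μ, hμ⟩ := exists_eigenvalue (f.restrict hfp)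
  obtain ⟨v, hv_mem, hv_ne⟩ := hμ.exists_hasEigenvector
  refine ⟨μ, hasEigenvalue_of_hasEigenvector (x := (v : V)) ⟨?_, by simpa using hv_ne⟩⟩
  exact eigenspace_restrict_le_eigenspace f hfp μ ⟨v, hv_mem, rfl⟩

theorem Commute.star_mul_self_of_isSelfAdjoint {R : Type*} [Monoid R] [StarMul R] {T A : R}
    (hA : IsSelfAdjoint A) (hTA : Commute T A) : Commute (star T * T) A := by
  have hT'A : Commute (star T) A := hA.star_eq ▸ hTA.star_star
  exact hT'A.mul_left hTA

namespace ContinuousLinearMap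

variable {H : Type*} [NormedAddCommGroup H] [InnerProductSpace ℂ H] [CompleteSpace H]

/-- Every eigenspace of `S` for a nonzero eigenvalue is finite-dimensional and `A`-invariant,
so it would contain an eigenvector of `A`. -/
theorem eq_zero_of_isCompactOperator_of_commute {S A : H →L[ℂ] H}
    (hS : IsCompactOperator S) (hS' : IsSelfAdjoint S)
    (hA : ∀ μ, ¬ HasEigenvalue (A : End ℂ H) μ) (hSA : Commute S A) : S = 0 := by
  rw [← eq_zero_of_forall_hasEigenvalue_eq_zero hS hS'.isSymmetric]
  intro μ hμ
  by_contra hμ0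
  have := finite_dimensional_eigenspace hS μ hμ0
  have : Nontrivial (eigenspace (S : End ℂ H) μ) :=
    Submodule.nontrivial_iff_ne_bot.mpr (hasEigenvalue_iff.mp hμ)
  have hmaps : ∀ x ∈ eigenspace (S : End ℂ H) μ, A x ∈ eigenspace (S : End ℂ H) μ :=
    fun _ hx => mapsTo_genEigenspace_of_comm (hSA.map toLinearMapRingHom) μ 1 hx
  exact (exists_hasEigenvalue_of_invariant hmaps).elim hA

end ContinuousLinearMap

/-- A compact operator on a complex Hilbert space that commutes with a bounded
self-adjoint operator having no eigenvectors (a "diffuse" operator) must be zero. -/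
theorem compact_commuting_with_diffuse_is_zero
    {H : Type*} [NormedAddCommGroup H] [InnerProductSpace ℂ H] [CompleteSpace H]
    (T A : H →L[ℂ] H)
    (hT : IsCompactOperator T)
    (hA : IsSelfAdjoint A)
    (hdiffuse : ∀ (lam : ℂ) (x : H), A x = lam • x → x = 0)
    (hcomm : T ∘L A = A ∘L T) :
    T = 0 := by
  have hA_no_eigenvalue : ∀ μ, ¬ HasEigenvalue (A : End ℂ H) μ := fun μ hμ =>
    let ⟨x, hx⟩ := hμ.exists_hasEigenvector
    hx.2 (hdiffuse μ x hx.apply_eq_smul)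
  -- `T` itself may have no nonzero eigenvalue (think of the Volterra operator), hence `T⋆T`.
  have hgram : star T * T = 0 :=
    ContinuousLinearMap.eq_zero_of_isCompactOperator_of_commute (hT.clm_comp (star T))
      (.star_mul_self T) hA_no_eigenvalue (.star_mul_self_of_isSelfAdjoint hA hcomm)
  exact (CStarRing.star_mul_self_eq_zero_iff T).mp hgram
end

section
/- Peterson's trick for derivations: if δ is a derivation on an algebra containing X with δ(X) = 1⊗1 (into the bimodule M⊗M with actions a·(x⊗y)·b = ax⊗yb), and Z satisfies δ(Z) = 0 and [Z, X] = 0, then [Z, 1⊗1] = Z⊗1 − 1⊗Z = 0; consequently if additionally (τ⊗τ)-norms are faithful, Z = τ(Z)·1. -/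
open TensorProduct

section Leibniz

variable {R A : Type*} [CommSemiring R] [Semiring A] [Algebra R A]
  {δ : A → A ⊗[R] A} (hLeib : ∀ a b : A, δ (a * b) = δ a * (1 ⊗ₜ[R] b) + (a ⊗ₜ[R] 1) * δ b)
  {Z : A}

include hLeib

theorem leibniz_mul_of_left_eq_zero (hZ : δ Z = 0) (X : A) :
    δ (Z * X) = (Z ⊗ₜ[R] 1) * δ X := by
  rw [hLeib, hZ, zero_mul, zero_add]

theorem leibniz_mul_of_right_eq_zero (hZ : δ Z = 0) (X : A) :
    δ (X * Z) = δ X * (1 ⊗ₜ[R] Z) := by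
  rw [hLeib, hZ, mul_zero, add_zero]

end Leibniz

/-- Slicing with `φ` in the second leg: `id ⊗ φ` sends `z ⊗ e` to `z` and `e ⊗ z` to `φ z • e`. -/
theorem eq_smul_of_tmul_eq_tmul {R M : Type*} [CommSemiring R] [AddCommMonoid M] [Module R M]
    (φ : M →ₗ[R] R) {e : M} (he : φ e = 1) {z : M} (h : z ⊗ₜ[R] e = e ⊗ₜ[R] z) :
    z = φ z • e := by
  simpa [he] using congrArg (TensorProduct.rid R M ∘ LinearMap.lTensor M φ) h

theorem peterson_trick_general
    {M : Type*} [Ring M] [Algebra ℂ M]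
    (τ : M →ₗ[ℂ] ℂ)
    (hτ1 : τ 1 = 1)
    (δ : M →ₗ[ℂ] M ⊗[ℂ] M)
    (hLeib : ∀ a b : M, δ (a * b) = δ a * (1 ⊗ₜ[ℂ] b) + (a ⊗ₜ[ℂ] 1) * δ b)
    (X Z : M)
    (hX : δ X = 1 ⊗ₜ[ℂ] 1)
    (hZ : δ Z = 0)
    (hcomm : Z * X = X * Z) :
    Z ⊗ₜ[ℂ] 1 - 1 ⊗ₜ[ℂ] Z = 0 ∧ Z = τ Z • 1 := by
  have hswap : Z ⊗ₜ[ℂ] (1 : M) = 1 ⊗ₜ[ℂ] Z := by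
    have h := congrArg δ hcomm
    rwa [leibniz_mul_of_left_eq_zero hLeib hZ, leibniz_mul_of_right_eq_zero hLeib hZ, hX,
      ← Algebra.TensorProduct.one_def, mul_one, one_mul] at h
  exact ⟨sub_eq_zero.2 hswap, eq_smul_of_tmul_eq_tmul τ hτ1 hswap⟩

/-- Peterson's trick for derivations: if `δ` is a derivation into the `M`–`M`
bimodule `M ⊗ M` (with actions `a·(x⊗y)·b = ax ⊗ yb`) with `δ(X) = 1⊗1`, and `Z`
satisfies `δ(Z) = 0` and `[Z,X] = 0`, then `Z⊗1 − 1⊗Z = 0`; consequently, if the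
trace `τ` is faithful, `Z = τ(Z)·1`. -/
theorem peterson_trick
    {M : Type*} [Ring M] [StarRing M] [Algebra ℂ M] [StarModule ℂ M]
    (τ : M →ₗ[ℂ] ℂ)
    (hτ1 : τ 1 = 1)
    (htrace : ∀ x y : M, τ (x * y) = τ (y * x))
    (hstar : ∀ x : M, τ (star x) = starRingEnd ℂ (τ x))
    (hfaithful : ∀ x : M, τ (star x * x) = 0 → x = 0)
    (δ : M →ₗ[ℂ] M ⊗[ℂ] M)
    (hLeib : ∀ a b : M, δ (a * b) = δ a * (1 ⊗ₜ[ℂ] b) + (a ⊗ₜ[ℂ] 1) * δ b)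
    (X Z : M)
    (hX : δ X = 1 ⊗ₜ[ℂ] 1)
    (hZ : δ Z = 0)
    (hcomm : Z * X = X * Z) :
    Z ⊗ₜ[ℂ] 1 - 1 ⊗ₜ[ℂ] Z = 0 ∧ Z = τ Z • 1 :=
  peterson_trick_general τ hτ1 δ hLeib X Z hX hZ hcomm
end

section
/- Norm-resolvent continuity estimate used in the Kaplansky-type argument: for elements X, X_n of a tracial von Neumann algebra with ‖X_n − X‖₂ → 0 and with all auxiliary factors uniformly bounded in operator norm by functional calculus, one has ‖X_n(1+X_n*X_n)^{-1}X_n* − X(1+X*X)^{-1}X*‖₂ → 0. -/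
/-!
Work in the GNS space of `τ`, whose seminorm is `‖·‖₂`. Left multiplication by `a` acts on it with
norm at most `‖a‖`, and traciality gives `‖ξ*‖₂ = ‖ξ‖₂`, hence `‖aξb‖₂ ≤ ‖a‖ ‖ξ‖₂ ‖b‖`.
The resolvent identity `u x - u y = u x ((1 + y*y) - (1 + x*x)) u y` for `u x = (1 + x*x)⁻¹`
writes `R x - R y`, where `R x = resolventConj x = x (u x) x*`, as four terms `a ξ b` with `ξ`
one of `x - y`, `y - x` or their adjoints. The outer factors are `x (u x)`, `(u y) y*`, `R x`, `R y`; functional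
calculus in `x*x` bounds their norms by `1/2`, `1/2`, `1`, `1`, so `‖R x - R y‖₂ ≤ 2 ‖x - y‖₂`.
-/

open Filter
open scoped ComplexOrder

section ResolventConj

variable {R : Type*} [Ring R] [StarRing R]

noncomputable def resolventConj (x : R) : R := x * Ring.inverse (1 + star x * x) * star x

lemma resolventConj_sub_resolventConj {x y : R} (hx : IsUnit (1 + star x * x))
    (hy : IsUnit (1 + star y * y)) :
    resolventConj x - resolventConj y =
      x * Ring.inverse (1 + star x * x) * (star x - star y)
      + x * Ring.inverse (1 + star x * x) * (star y - star x) * resolventConj y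
      + resolventConj x * (y - x) * (Ring.inverse (1 + star y * y) * star y)
      + (x - y) * (Ring.inverse (1 + star y * y) * star y) := by
  set u := Ring.inverse (1 + star x * x)
  set v := Ring.inverse (1 + star y * y)
  have huv : u * ((1 + star y * y) - (1 + star x * x)) * v = u - v := by
    rw [mul_sub, sub_mul, Ring.inverse_mul_cancel _ hx, mul_assoc, Ring.mul_inverse_cancel _ hy,
      one_mul, mul_one]
  calc resolventConj x - resolventConj y
      = x * u * (star x - star y) + x * (u * ((1 + star y * y) - (1 + star x * x)) * v) * star y
        + (x - y) * (v * star y) := by rw [huv, resolventConj, resolventConj]; noncomm_ring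
    _ = _ := by rw [resolventConj, resolventConj]; noncomm_ring

end ResolventConj

section Resolvent

variable {A : Type*} [CStarAlgebra A]

lemma cfc_one_add_star_mul_self (a : A) :
    cfc (fun t : ℝ => 1 + t) (star a * a) = 1 + star a * a := by
  rw [cfc_const_add 1 (fun t => t) _, cfc_id' ℝ (star a * a), map_one]

lemma isUnit_one_add_star_mul_self (a : A) : IsUnit (1 + star a * a) := by
  rw [← cfc_one_add_star_mul_self, isUnit_cfc_iff _ _ (by fun_prop)]
  intro t ht
  have := spectrum_star_mul_self_nonneg t ht
  positivity

lemma continuousOn_inv_one_add_spectrum_star_mul_self (a : A) :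
    ContinuousOn (fun t : ℝ => (1 + t)⁻¹) (spectrum ℝ (star a * a)) :=
  ContinuousOn.inv₀ (by fun_prop) fun t ht => by
    have := spectrum_star_mul_self_nonneg t ht
    positivity

lemma ringInverse_one_add_star_mul_self (a : A) :
    Ring.inverse (1 + star a * a) = cfc (fun t : ℝ => (1 + t)⁻¹) (star a * a) := by
  rw [cfc_inv (fun t : ℝ => 1 + t) _ fun t ht => ?_, cfc_one_add_star_mul_self]
  have := spectrum_star_mul_self_nonneg t ht
  positivity

lemma norm_mul_cfc_star_mul_self_sq (a : A) (f : ℝ → ℝ)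
    (hf : ContinuousOn f (spectrum ℝ (star a * a))) :
    ‖a * cfc f (star a * a)‖ ^ 2 = ‖cfc (fun t => t * f t ^ 2) (star a * a)‖ := by
  rw [sq, ← CStarRing.norm_star_mul_self, star_mul, (IsSelfAdjoint.cfc (f := f)).star_eq,
    show cfc f (star a * a) * star a * (a * cfc f (star a * a))
      = cfc f (star a * a) * (star a * a) * cfc f (star a * a) by noncomm_ring]
  nth_rewrite 2 [← cfc_id' ℝ (star a * a)]
  rw [← cfc_mul _ _ _ hf, ← cfc_mul _ _ _ (by fun_prop) hf]
  congr 2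
  funext t
  ring

lemma norm_mul_ringInverse_one_add_star_mul_self_le (a : A) :
    ‖a * Ring.inverse (1 + star a * a)‖ ≤ 1 / 2 := by
  refine pow_le_pow_iff_left₀ (norm_nonneg _) (by norm_num) two_ne_zero |>.mp ?_
  rw [ringInverse_one_add_star_mul_self,
    norm_mul_cfc_star_mul_self_sq _ _ (continuousOn_inv_one_add_spectrum_star_mul_self a)]
  refine norm_cfc_le (by norm_num) fun t ht => ?_
  have ht : 0 ≤ t := spectrum_star_mul_self_nonneg t ht
  rw [Real.norm_of_nonneg (by positivity), inv_pow, ← div_eq_mul_inv,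
    div_le_iff₀ (by positivity)]
  nlinarith [sq_nonneg (1 - t)]

lemma norm_ringInverse_one_add_star_mul_self_mul_star_le (a : A) :
    ‖Ring.inverse (1 + star a * a) * star a‖ ≤ 1 / 2 := by
  have hu : IsSelfAdjoint (Ring.inverse (1 + star a * a)) :=
    ((IsSelfAdjoint.one A).add (.star_mul_self a)).ringInverse
  rw [← hu.star_eq, ← star_mul, norm_star]
  exact norm_mul_ringInverse_one_add_star_mul_self_le a

lemma norm_resolventConj_le (a : A) : ‖resolventConj a‖ ≤ 1 := by
  have hcont := continuousOn_inv_one_add_spectrum_star_mul_self a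
  set v := cfc (fun t : ℝ => √(1 + t)⁻¹) (star a * a)
  have hv : v * v = Ring.inverse (1 + star a * a) := by
    rw [ringInverse_one_add_star_mul_self, ← cfc_mul _ _ _ (by fun_prop) (by fun_prop)]
    refine cfc_congr fun t ht => Real.mul_self_sqrt ?_
    have := spectrum_star_mul_self_nonneg t ht
    positivity
  have hsq : ‖a * v‖ ^ 2 ≤ 1 := by
    rw [norm_mul_cfc_star_mul_self_sq _ _ (by fun_prop)]
    refine norm_cfc_le zero_le_one fun t ht => ?_
    have ht : 0 ≤ t := spectrum_star_mul_self_nonneg t ht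
    rw [Real.sq_sqrt (by positivity), Real.norm_of_nonneg (by positivity), ← div_eq_mul_inv,
      div_le_one (by positivity)]
    linarith
  calc ‖resolventConj a‖ = ‖a * v * star (a * v)‖ := by
        rw [star_mul, (IsSelfAdjoint.cfc (f := fun t : ℝ => √(1 + t)⁻¹)).star_eq, resolventConj,
          ← hv]
        noncomm_ring
    _ = ‖a * v‖ ^ 2 := by rw [CStarRing.norm_self_mul_star, sq]
    _ ≤ 1 := hsq

end Resolvent

namespace PositiveLinearMap

section PreGNS

variable {A : Type*} [NonUnitalCStarAlgebra A] [PartialOrder A] [StarOrderedRing A]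
  (f : A →ₚ[ℂ] ℂ)

lemma norm_toPreGNS_mul_le (a b : A) : ‖f.toPreGNS (a * b)‖ ≤ ‖a‖ * ‖f.toPreGNS b‖ :=
  calc ‖f.toPreGNS (a * b)‖ = ‖f.leftMulMapPreGNS a (f.toPreGNS b)‖ := rfl
    _ ≤ ‖f.leftMulMapPreGNS a‖ * ‖f.toPreGNS b‖ := (f.leftMulMapPreGNS a).le_opNorm _
    _ ≤ ‖a‖ * ‖f.toPreGNS b‖ := by
      gcongr
      exact LinearMap.mkContinuous_norm_le _ (norm_nonneg a) _

variable {f} (htrace : ∀ x y, f (x * y) = f (y * x))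
include htrace

lemma norm_toPreGNS_star_of_trace (a : A) : ‖f.toPreGNS (star a)‖ = ‖f.toPreGNS a‖ := by
  rw [preGNS_norm_def, preGNS_norm_def, ofPreGNS_toPreGNS, ofPreGNS_toPreGNS, star_star, htrace]

lemma norm_toPreGNS_mul_le_of_trace (a b : A) : ‖f.toPreGNS (a * b)‖ ≤ ‖f.toPreGNS a‖ * ‖b‖ := by
  rw [← norm_toPreGNS_star_of_trace htrace, star_mul, ← norm_toPreGNS_star_of_trace htrace a,
    ← norm_star b, mul_comm]
  exact f.norm_toPreGNS_mul_le _ _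

lemma norm_toPreGNS_mul_mul_le_of_trace (a ξ b : A) :
    ‖f.toPreGNS (a * ξ * b)‖ ≤ ‖a‖ * ‖f.toPreGNS ξ‖ * ‖b‖ :=
  (norm_toPreGNS_mul_le_of_trace htrace _ _).trans (by gcongr; exact f.norm_toPreGNS_mul_le _ _)

end PreGNS

lemma norm_toPreGNS_resolventConj_sub_le_of_trace {A : Type*} [CStarAlgebra A] [PartialOrder A]
    [StarOrderedRing A] {f : A →ₚ[ℂ] ℂ} (htrace : ∀ x y, f (x * y) = f (y * x)) (x y : A) :
    ‖f.toPreGNS (resolventConj x - resolventConj y)‖ ≤ 2 * ‖f.toPreGNS (x - y)‖ := by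
  set δ := ‖f.toPreGNS (x - y)‖
  have hxy : ‖f.toPreGNS (star x - star y)‖ = δ := by
    rw [← star_sub, norm_toPreGNS_star_of_trace htrace]
  have hyx : ‖f.toPreGNS (star y - star x)‖ = δ := by
    rw [← star_sub, norm_toPreGNS_star_of_trace htrace, map_sub, norm_sub_rev, ← map_sub]
  have hyx' : ‖f.toPreGNS (y - x)‖ = δ := by rw [map_sub, norm_sub_rev, ← map_sub]
  have hxu := norm_mul_ringInverse_one_add_star_mul_self_le x
  have hRx := norm_resolventConj_le x
  have hRy := norm_resolventConj_le y
  have huy := norm_ringInverse_one_add_star_mul_self_mul_star_le y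
  rw [resolventConj_sub_resolventConj (isUnit_one_add_star_mul_self x)
    (isUnit_one_add_star_mul_self y), map_add, map_add, map_add]
  refine norm_add₄_le.trans ?_
  grw [f.norm_toPreGNS_mul_le, norm_toPreGNS_mul_mul_le_of_trace htrace,
    norm_toPreGNS_mul_mul_le_of_trace htrace, norm_toPreGNS_mul_le_of_trace htrace, hxu, hRx,
    hRy, huy, hxy, hyx, hyx']
  linarith

end PositiveLinearMap

theorem kaplansky_L2_continuity_general
    {M : Type*} [NormedRing M] [StarRing M] [CStarRing M] [CompleteSpace M]
    [NormedAlgebra ℂ M] [StarModule ℂ M]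
    (τ : M →ₗ[ℂ] ℂ)
    (htrace : ∀ x y : M, τ (x * y) = τ (y * x))
    (hpos : ∀ a : M, 0 ≤ (τ (star a * a)).re ∧ (τ (star a * a)).im = 0)
    (n2 : M → ℝ) (hn2 : ∀ a, n2 a = Real.sqrt (τ (star a * a)).re)
    (X : ℕ → M) (X₀ : M)
    (hconv : Tendsto (fun n => n2 (X n - X₀)) atTop (nhds 0)) :
    Tendsto
      (fun n => n2 (X n * Ring.inverse (1 + star (X n) * X n) * star (X n)
        - X₀ * Ring.inverse (1 + star X₀ * X₀) * star X₀))
      atTop (nhds 0) := by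
  let : CStarAlgebra M := {}
  let := CStarAlgebra.spectralOrder M
  let := CStarAlgebra.spectralOrderedRing M
  let f : M →ₚ[ℂ] ℂ := .mk₀ τ fun x hx => by
    obtain ⟨s, rfl⟩ := CStarAlgebra.nonneg_iff_eq_star_mul_self.mp hx
    exact Complex.nonneg_iff.mpr ⟨(hpos s).1, (hpos s).2.symm⟩
  obtain rfl : n2 = fun a => ‖f.toPreGNS a‖ := funext hn2
  refine squeeze_zero (fun n => norm_nonneg _)
    (fun n => f.norm_toPreGNS_resolventConj_sub_le_of_trace htrace (X n) X₀) ?_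
  simpa using hconv.const_mul 2

/-- Continuity estimate used in the Kaplansky-type argument: in a tracial von
Neumann algebra `(M,τ)` with `‖a‖₂ = τ(a*a)^{1/2}`, if `‖Xₙ − X‖₂ → 0` then
`‖Xₙ(1+Xₙ*Xₙ)⁻¹Xₙ* − X(1+X*X)⁻¹X*‖₂ → 0`. -/
theorem kaplansky_L2_continuity
    {M : Type*} [NormedRing M] [StarRing M] [CStarRing M] [CompleteSpace M]
    [NormedAlgebra ℂ M] [StarModule ℂ M]
    (τ : M →ₗ[ℂ] ℂ)
    (hτ1 : τ 1 = 1)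
    (htrace : ∀ x y : M, τ (x * y) = τ (y * x))
    (hstar : ∀ x : M, τ (star x) = starRingEnd ℂ (τ x))
    (hpos : ∀ a : M, 0 ≤ (τ (star a * a)).re ∧ (τ (star a * a)).im = 0)
    (n2 : M → ℝ) (hn2 : ∀ a, n2 a = Real.sqrt (τ (star a * a)).re)
    (X : ℕ → M) (X₀ : M)
    (hconv : Tendsto (fun n => n2 (X n - X₀)) atTop (nhds 0)) :
    Tendsto
      (fun n => n2 (X n * Ring.inverse (1 + star (X n) * X n) * star (X n)
        - X₀ * Ring.inverse (1 + star X₀ * X₀) * star X₀))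
      atTop (nhds 0) :=
  kaplansky_L2_continuity_general τ htrace hpos n2 hn2 X X₀ hconv
end
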